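/- arXiv:2106.16213 — 2 statements merged into one kernel-verified Lean document; each statement's English description precedes it below -/
import Mathlib

section
/- Let p : ℕ → ℕ be an injective function such that p i is prime for every i, and let S be a finite set of natural numbers. Then the denominator (in lowest terms) of the rational number ∑_{i ∈ S} 1 / (p i) equals the product ∏_{i ∈ S} p i. -/
lemma aux_den_add (q : ℚ) (n : ℕ) (hn : 0 < n) (h : Nat.Coprime n q.den) :
    ((1 : ℚ) / n + q).den = n * q.den := by
  have hn' : (n : ℚ) ≠ 0 := Nat.cast_ne_zero.mpr hn.ne'
  have hd' : (q.den : ℚ) ≠ 0 := Nat.cast_ne_zero.mpr q.den_nz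
  have key : (1 : ℚ) / n + q
      = ((q.den + q.num * n : ℤ) : ℚ) / ((n * q.den : ℤ) : ℚ) := by
    push_cast
    conv_lhs => rw [← Rat.num_div_den q]
    field_simp
  have c2 : IsCoprime (q.num) (q.den : ℤ) :=
    Int.isCoprime_iff_gcd_eq_one.mpr q.reduced
  have c1 : IsCoprime ((q.den : ℤ)) (n : ℤ) := by
    rw [Int.isCoprime_iff_gcd_eq_one, Int.gcd_natCast_natCast]
    exact h.symm
  have cop : IsCoprime ((q.den : ℤ) + q.num * n) ((n : ℤ) * q.den) := by
    refine IsCoprime.mul_right ?_ ?_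
    · have := (c1.add_mul_left_left q.num).symm
      -- this : IsCoprime n (q.den + n * q.num)
      rw [mul_comm] at this
      exact this.symm
    · have : IsCoprime (q.num * n) (q.den : ℤ) := (c2.mul_left c1.symm)
      have h2 := this.add_mul_left_left 1
      rw [mul_one] at h2
      rw [add_comm]
      exact h2
  have hb0 : (0 : ℤ) < (n * q.den : ℤ) := by positivity
  have := Rat.den_div_eq_of_coprime (a := (q.den + q.num * n : ℤ))
    (b := ((n : ℤ) * q.den)) hb0 (Int.isCoprime_iff_gcd_eq_one.mp cop)
  rw [key]
  exact_mod_cast this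

theorem sum_prime_reciprocals_den (p : ℕ → ℕ) (hinj : Function.Injective p)
    (hp : ∀ i, Nat.Prime (p i)) (S : Finset ℕ) :
    (∑ i ∈ S, (1 : ℚ) / (p i)).den = ∏ i ∈ S, p i := by
  induction S using Finset.induction_on with
  | empty => simp
  | @insert a s ha ih =>
    rw [Finset.sum_insert ha, Finset.prod_insert ha]
    have hcop : Nat.Coprime (p a) (∑ i ∈ s, (1 : ℚ) / (p i)).den := by
      rw [ih]
      refine Nat.Coprime.prod_right fun i hi => ?_
      exact (Nat.coprime_primes (hp a) (hp i)).mpr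
        (fun he => ha (hinj he ▸ hi))
    rw [aux_den_add _ _ (hp a).pos hcop, ih]
end

section
/- Let c ≥ 1, z ≥ 1, and n ≥ 2 be natural numbers, let m ≤ n, and let q : Fin m → ℚ be rationals such that for each i the denominator of q i (in lowest terms) divides 2^(c·z) and |numerator of q i| ≤ 2^(c·z). Then the sum s = ∑_i q i satisfies: the denominator of s divides 2^(c·z), and if s ≠ 0 then log₂(|numerator of s|) ≤ 2·c·z + log₂(n); consequently the total number of bits needed to represent s (sign bit, numerator, and denominator) is at most 4·c·z + 2·log₂(n) + 1. -/
theorem float_sum_size_bound (c z n m : ℕ) (hc : 1 ≤ c) (hz : 1 ≤ z) (hn : 2 ≤ n)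
    (hmn : m ≤ n) (q : Fin m → ℚ)
    (hden : ∀ i, (q i).den ∣ 2 ^ (c * z))
    (hnum : ∀ i, |(q i).num| ≤ (2 : ℤ) ^ (c * z)) :
    (∑ i, q i).den ∣ 2 ^ (c * z) ∧
    ((∑ i, q i) ≠ 0 →
      Nat.log 2 (∑ i, q i).num.natAbs ≤ 2 * c * z + Nat.log 2 n) ∧
    1 + (1 + Nat.log 2 (∑ i, q i).num.natAbs) + (1 + Nat.log 2 (∑ i, q i).den)
      ≤ 4 * c * z + 2 * Nat.log 2 n + 1 := by
  set e := c * z with he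
  have he1 : 1 ≤ e := Nat.one_le_iff_ne_zero.mpr (by positivity)
  set s := ∑ i, q i with hs
  set k : ℤ := ∑ i, (q i).num * (2 ^ e / (q i).den : ℕ) with hk
  have hterm : ∀ i, ((q i).num : ℚ) * ((2 ^ e / (q i).den : ℕ) : ℚ) = q i * 2 ^ e := by
    intro i
    have hdm : ((q i).den : ℚ) * ((2 ^ e / (q i).den : ℕ) : ℚ) = (2 : ℚ) ^ e := by
      exact_mod_cast congrArg (Nat.cast : ℕ → ℚ)
        (Nat.mul_div_cancel' (hden i) : (q i).den * (2 ^ e / (q i).den) = 2 ^ e)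
    have hd0 : ((q i).den : ℚ) ≠ 0 := by exact_mod_cast (q i).den_nz
    have hmul : q i * ((q i).den : ℚ) = (q i).num := by
      have h := Rat.num_div_den (q i)
      rw [div_eq_iff hd0] at h
      exact h.symm
    calc ((q i).num : ℚ) * ((2 ^ e / (q i).den : ℕ) : ℚ)
        = q i * (((q i).den : ℚ) * ((2 ^ e / (q i).den : ℕ) : ℚ)) := by
          rw [← mul_assoc, hmul]
      _ = q i * 2 ^ e := by rw [hdm]
  have hks : (k : ℚ) = s * 2 ^ e := by
    rw [hk, hs, Finset.sum_mul]
    rw [Int.cast_sum]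
    simp only [Int.cast_mul, Int.cast_natCast]
    exact Finset.sum_congr rfl fun i _ => hterm i
  have h2e : ((2 : ℤ) ^ e) ≠ 0 := by positivity
  have hsk : s = Rat.divInt k (2 ^ e) := by
    have h2q : (((2:ℤ) ^ e : ℤ) : ℚ) ≠ 0 := by positivity
    rw [Rat.divInt_eq_div, eq_div_iff h2q, hks]
    push_cast
    ring
  have hdendvd : s.den ∣ 2 ^ e := by
    have := Rat.den_dvd k (2 ^ e)
    rw [← hsk] at this
    exact_mod_cast this
  have hnumdvd : s.num ∣ k := by
    have := Rat.num_dvd k h2e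
    rwa [← hsk] at this
  have hkbound : |k| ≤ (n : ℤ) * 2 ^ (2 * e) := by
    calc |k| ≤ ∑ i, |(q i).num * ((2 ^ e / (q i).den : ℕ) : ℤ)| :=
          Finset.abs_sum_le_sum_abs _ _
      _ ≤ ∑ _i : Fin m, (2:ℤ) ^ e * 2 ^ e := by
          apply Finset.sum_le_sum
          intro i _
          rw [abs_mul]
          apply mul_le_mul (hnum i) ?_ (abs_nonneg _) (by positivity)
          rw [abs_of_nonneg (by positivity)]
          exact_mod_cast Nat.le_of_dvd (by positivity)
            (Nat.div_dvd_of_dvd (hden i))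
      _ = (m : ℤ) * 2 ^ (2 * e) := by
          rw [Finset.sum_const, Finset.card_univ, Fintype.card_fin, two_mul, pow_add]
          ring
      _ ≤ (n : ℤ) * 2 ^ (2 * e) :=
          mul_le_mul_of_nonneg_right (by exact_mod_cast hmn) (by positivity)
  have hnumabs : s.num.natAbs ≤ n * 2 ^ (2 * e) := by
    have hkabs : k.natAbs ≤ n * 2 ^ (2 * e) := by
      have : ((k.natAbs : ℤ)) ≤ ((n * 2 ^ (2 * e) : ℕ) : ℤ) := by
        rw [Int.natCast_natAbs]; push_cast; exact hkbound
      exact_mod_cast this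
    rcases eq_or_ne k 0 with hk0 | hk0
    · have : s = 0 := by rw [hsk, hk0]; simp
      simp [this]
    · have hdvd : s.num.natAbs ∣ k.natAbs := Int.natAbs_dvd_natAbs.mpr hnumdvd
      exact (Nat.le_of_dvd (Int.natAbs_pos.mpr hk0) hdvd).trans hkabs
  have hlognum : Nat.log 2 s.num.natAbs ≤ 2 * e + Nat.log 2 n := by
    rcases eq_or_ne s.num.natAbs 0 with h0 | h0
    · simp [h0]
    · have hlt : s.num.natAbs < 2 ^ (2 * e + Nat.log 2 n + 1) := by
        calc s.num.natAbs ≤ n * 2 ^ (2 * e) := hnumabs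
          _ < 2 ^ (Nat.log 2 n + 1) * 2 ^ (2 * e) := by
              exact (Nat.mul_lt_mul_right (by positivity)).mpr
                (Nat.lt_pow_succ_log_self (by norm_num) n)
          _ = 2 ^ (2 * e + Nat.log 2 n + 1) := by ring
      have := Nat.log_lt_of_lt_pow h0 hlt
      omega
  have hlogden : Nat.log 2 s.den ≤ e := by
    calc Nat.log 2 s.den ≤ Nat.log 2 (2 ^ e) :=
          Nat.log_mono_right (Nat.le_of_dvd (by positivity) hdendvd)
      _ = e := Nat.log_pow (by norm_num) e
  have hlogn : 1 ≤ Nat.log 2 n := by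
    have h22 : Nat.log 2 2 = 1 := by
      simpa using Nat.log_pow (b := 2) (by norm_num) 1
    calc 1 = Nat.log 2 2 := h22.symm
      _ ≤ Nat.log 2 n := Nat.log_mono_right hn
  have ha : 2 * c * z = 2 * e := by rw [he]; ring
  have hb : 4 * c * z = 4 * e := by rw [he]; ring
  refine ⟨hdendvd, fun _ => by omega, by omega⟩
end
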